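/- arXiv:2007.08013 — 8 statements merged into one kernel-verified Lean document; each statement's English description precedes it below -/
import Mathlib

section
/- Let R be a semiprime ring, α an automorphism of R, and F, d maps from R to R (not necessarily additive) such that F(xy) = F(x)y + α(x)d(y) for all x, y ∈ R. Then d satisfies d(yz) = d(y)z + α(y)d(z) for all y, z ∈ R, i.e., d is a multiplicative skew derivation with respect to α. -/
theorem stmt0 {R : Type*} [NonUnitalRing R]
    (hsemi : ∀ a : R, (∀ r : R, a * r * a = 0) → a = 0)
    (α : R ≃+* R) (F d : R → R)
    (h1 : ∀ x y : R, F (x * y) = F x * y + α x * d y) :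
    ∀ y z : R, d (y * z) = d y * z + α y * d z := by
  intro y z
  set A := d (y * z) - (d y * z + α y * d z) with hA
  have key : ∀ w : R, w * A = 0 := by
    intro w
    have hx : ∀ x : R, α x * A = 0 := by
      intro x
      have e1 : F (x * (y * z)) = F x * (y * z) + α x * d (y * z) := h1 x (y * z)
      have e2 : F (x * y * z) = (F x * y + α x * d y) * z + α x * α y * d z := by
        rw [h1 (x * y) z, h1 x y, map_mul]
      rw [mul_assoc] at e2
      have e := e1.symm.trans e2
      simp only [add_mul, ← mul_assoc] at e
      rw [add_assoc] at e
      have h' := add_left_cancel e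
      rw [hA]
      simp only [mul_sub, mul_add, ← mul_assoc]
      rw [h', sub_self]
    have := hx (α.symm w)
    rwa [RingEquiv.apply_symm_apply] at this
  have hz : A = 0 := hsemi A (fun r => by rw [key (A * r)])
  exact sub_eq_zero.mp hz
end

section
/- Let R be a semiprime ring, α an automorphism of R, and F, d maps from R to R (not necessarily additive) such that F(xy) = F(x)α(y) + xd(y) for all x, y ∈ R. Then d satisfies d(yz) = d(y)α(z) + yd(z) for all y, z ∈ R. -/
theorem stmt1 {R : Type*} [NonUnitalRing R]
    (hsemi : ∀ a : R, (∀ r : R, a * r * a = 0) → a = 0)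
    (α : R ≃+* R) (F d : R → R)
    (h2 : ∀ x y : R, F (x * y) = F x * α y + x * d y) :
    ∀ y z : R, d (y * z) = d y * α z + y * d z := by
  intro y z
  set a := d (y * z) - (d y * α z + y * d z) with ha
  have hx : ∀ x : R, x * a = 0 := by
    intro x
    have e1 := h2 (x * y) z
    have e2 := h2 x (y * z)
    rw [h2 x y] at e1
    rw [← mul_assoc, e1, map_mul] at e2
    -- e2 : F x * (α y * α z) + x * d (y*z) = (F x * α y + x * d y) * α z + (x*y) * d z
    have key : x * d (y * z) = x * d y * α z + x * y * d z := by
      have h := e2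
      rw [add_mul, ← mul_assoc] at h
      have h' : F x * α y * α z + x * d (y * z)
          = F x * α y * α z + (x * d y * α z + x * y * d z) := by
        rw [← h]; abel
      exact add_left_cancel h'
    rw [ha, mul_sub, mul_add, key, ← mul_assoc, ← mul_assoc]
    abel
  have : a = 0 := hsemi a fun r => by rw [mul_assoc, hx, mul_zero]
  rw [ha, sub_eq_zero] at this
  exact this
end

section
/- Let R be a ring, α an automorphism of R, and F, d maps from R to R such that both F(xy) = F(x)y + α(x)d(y) and F(xy) = F(x)α(y) + xd(y) hold for all x, y ∈ R. Define G(x,y) := F(x+y) − F(x) − F(y). Then G(x,y)z = G(x,y)α(z) for all x, y, z ∈ R. -/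
theorem stmt3 {R : Type*} [NonUnitalRing R]
    (α : R ≃+* R) (F d : R → R)
    (h1 : ∀ x y : R, F (x * y) = F x * y + α x * d y)
    (h2 : ∀ x y : R, F (x * y) = F x * α y + x * d y) :
    ∀ x y z : R, (F (x + y) - F x - F y) * z = (F (x + y) - F x - F y) * α z := by
  intro x y z
  have k : ∀ a : R, F a * z - F a * α z = a * d z - α a * d z := by
    intro a
    have h := (h1 a z).symm.trans (h2 a z)
    rw [sub_eq_sub_iff_add_eq_add]
    exact h.trans (add_comm _ _)
  have hx := k x
  have hy := k y
  have hxy := k (x + y)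
  rw [map_add] at hxy
  linear_combination (norm := noncomm_ring) hxy - hx - hy
end

section
/- Let R be a prime ring, α an automorphism of R, and a ∈ R such that az = aα(z) for all z ∈ R. Then either a = 0 or α is the identity map on R. -/
theorem stmt5 {R : Type*} [NonUnitalRing R]
    (hprime : ∀ a b : R, (∀ r : R, a * r * b = 0) → a = 0 ∨ b = 0)
    (α : R ≃+* R) (a : R)
    (h : ∀ z : R, a * z = a * α z) :
    a = 0 ∨ ∀ z : R, α z = z := by
  by_cases ha : a = 0
  · exact Or.inl ha
  · right
    intro r
    have key : ∀ z : R, a * z * (α r - r) = 0 := by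
      intro z
      have h1 : a * (z * r) = a * α z * α r := by
        rw [h (z * r), map_mul, mul_assoc]
      have h2 : a * α z = a * z := (h z).symm
      rw [h2] at h1
      rw [mul_sub, ← h1, mul_assoc, sub_self]
    rcases hprime a (α r - r) key with h3 | h3
    · exact absurd h3 ha
    · exact sub_eq_zero.mp h3
end

section
/- Let R be a prime ring, α an automorphism of R, and F, d maps from R to R such that both F(xy) = F(x)y + α(x)d(y) and F(xy) = F(x)α(y) + xd(y) hold for all x, y ∈ R. Then either α is the identity map on R, or F is additive (F(x+y) = F(x) + F(y) for all x, y ∈ R). -/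
theorem stmt6 {R : Type*} [NonUnitalRing R]
    (hprime : ∀ a b : R, (∀ r : R, a * r * b = 0) → a = 0 ∨ b = 0)
    (α : R ≃+* R) (F d : R → R)
    (h1 : ∀ x y : R, F (x * y) = F x * y + α x * d y)
    (h2 : ∀ x y : R, F (x * y) = F x * α y + x * d y) :
    (∀ z : R, α z = z) ∨ (∀ x y : R, F (x + y) = F x + F y) := by
  by_cases hid : ∀ z : R, α z = z
  · exact Or.inl hid
  · right
    push_neg at hid
    obtain ⟨r0, hr0⟩ := hid
    -- key relation : F x * (y - α y) = (x - α x) * d y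
    have key : ∀ x y : R, F x * (y - α y) = (x - α x) * d y := by
      intro x y
      have h := (h1 x y).symm.trans (h2 x y)
      rw [mul_sub, sub_mul]
      rw [sub_eq_sub_iff_add_eq_add]
      exact h.trans (add_comm _ _)
    intro x y
    set A := F (x + y) - F x - F y with hA
    have step1 : ∀ z : R, A * (z - α z) = 0 := by
      intro z
      rw [hA, sub_mul, sub_mul, key x z, key y z, key (x + y) z, map_add,
        ← sub_mul, ← sub_mul]
      rw [show x + y - (α x + α y) - (x - α x) - (y - α y) = 0 by abel, zero_mul]
    have step2 : ∀ z r : R, A * z * (α r - r) = 0 := by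
      intro z r
      have e1 := step1 (α.symm z * r)
      have e2 := step1 (α.symm z)
      rw [map_mul, α.apply_symm_apply, mul_sub, sub_eq_zero] at e1
      rw [α.apply_symm_apply, mul_sub, sub_eq_zero] at e2
      have e3 : A * α.symm z * r = A * z * r := by rw [e2]
      have e4 : A * z * α r = A * α.symm z * r := by
        rw [mul_assoc, mul_assoc, e1]
      rw [mul_sub, e4, e3, sub_self]
    have hne : α r0 - r0 ≠ 0 := sub_ne_zero.mpr hr0
    rcases hprime A (α r0 - r0) (fun z => step2 z r0) with h | h
    · rw [hA, sub_sub, sub_eq_zero] at h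
      exact h
    · exact absurd h hne
end

section
/- Let R be a prime ring, α an automorphism of R, and F, d maps from R to R such that both F(xy) = F(x)y + α(x)d(y) and F(xy) = F(x)α(y) + xd(y) hold for all x, y ∈ R. Then either (i) α = id_R, so that F is a multiplicative (generalized) derivation, or (ii) both F and d are additive and d is a skew derivation for α, so that F is a generalized skew derivation. -/
theorem stmt7 {R : Type*} [NonUnitalRing R]
    (hprime : ∀ a b : R, (∀ r : R, a * r * b = 0) → a = 0 ∨ b = 0)
    (α : R ≃+* R) (F d : R → R)
    (h1 : ∀ x y : R, F (x * y) = F x * y + α x * d y)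
    (h2 : ∀ x y : R, F (x * y) = F x * α y + x * d y) :
    (∀ z : R, α z = z) ∨
      ((∀ x y : R, F (x + y) = F x + F y) ∧ (∀ x y : R, d (x + y) = d x + d y) ∧
       (∀ x y : R, d (x * y) = d x * y + α x * d y)) := by
  by_cases hα : ∀ z : R, α z = z
  · exact Or.inl hα
  right
  push_neg at hα
  obtain ⟨z0, hz0⟩ := hα
  have hz0' : z0 - α z0 ≠ 0 := sub_ne_zero.mpr (fun h => hz0 h.symm)
  -- the basic identity E
  have E : ∀ x y : R, F x * (y - α y) = (x - α x) * d y := by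
    intro x y
    have h := (h1 x y).symm.trans (h2 x y)
    have : F x * y - F x * α y = x * d y - α x * d y := by
      rw [sub_eq_sub_iff_add_eq_add, h]; exact add_comm _ _
    calc F x * (y - α y) = F x * y - F x * α y := by noncomm_ring
      _ = x * d y - α x * d y := this
      _ = (x - α x) * d y := by noncomm_ring
  -- d is a skew derivation
  have hd : ∀ y z : R, d (y * z) = d y * z + α y * d z := by
    intro y z
    have key : ∀ r : R, r * (d (y * z) - (d y * z + α y * d z)) = 0 := by
      intro r
      set x := α.symm r with hxdef
      have hx : α x = r := α.apply_symm_apply r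
      have e1 := h1 (x * y) z
      rw [map_mul, hx, mul_assoc] at e1
      have e2 := h1 x y
      rw [hx] at e2
      have e3 := h1 x (y * z)
      rw [hx] at e3
      have e4 : F x * (y * z) + r * d (y * z) = F (x * y) * z + r * α y * d z := by
        rw [← e3, e1]
      rw [e2] at e4
      have e5 : F x * y * z + r * d (y * z)
          = F x * y * z + (r * (d y * z) + r * (α y * d z)) := by
        calc F x * y * z + r * d (y * z) = F x * (y * z) + r * d (y * z) := by noncomm_ring
          _ = (F x * y + r * d y) * z + r * α y * d z := e4
          _ = F x * y * z + (r * (d y * z) + r * (α y * d z)) := by noncomm_ring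
      have e6 := add_left_cancel e5
      rw [mul_sub, e6]
      noncomm_ring
    rcases hprime (z0 - α z0) (d (y * z) - (d y * z + α y * d z))
        (fun r => by rw [mul_assoc, key r, mul_zero]) with h | h
    · exact absurd h hz0'
    · have := sub_eq_zero.mp h
      rw [this]
  -- the strengthened identity
  have star : ∀ x t z : R, F x * t * (z - α z) = (x - α x) * t * d z := by
    intro x t z
    have ht : α (α.symm t) = t := α.apply_symm_apply t
    set y := α.symm t with hydef
    rw [← ht]
    have e1 := E x (y * z)
    rw [map_mul, hd y z] at e1
    have e2 := E x y
    have e3 : F x * α y * (z - α z)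
        = F x * (y * z - α y * α z) - F x * (y - α y) * z := by noncomm_ring
    rw [e3, e1, e2]
    noncomm_ring
  refine ⟨?_, ?_, hd⟩
  · -- additivity of F
    intro x y
    have key : ∀ t : R, (F (x + y) - (F x + F y)) * t * (z0 - α z0) = 0 := by
      intro t
      have e1 := star (x + y) t z0
      rw [map_add] at e1
      have e2 := star x t z0
      have e3 := star y t z0
      have e4 : F (x + y) * t * (z0 - α z0)
          = F x * t * (z0 - α z0) + F y * t * (z0 - α z0) := by
        rw [e1, e2, e3]; noncomm_ring
      have e5 : (F (x + y) - (F x + F y)) * t * (z0 - α z0)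
          = F (x + y) * t * (z0 - α z0)
            - (F x * t * (z0 - α z0) + F y * t * (z0 - α z0)) := by noncomm_ring
      rw [e5, e4]
      noncomm_ring
    rcases hprime (F (x + y) - (F x + F y)) (z0 - α z0) key with h | h
    · have := sub_eq_zero.mp h
      rw [this]
    · exact absurd h hz0'
  · -- additivity of d
    intro x y
    have key : ∀ t : R, (z0 - α z0) * t * (d (x + y) - (d x + d y)) = 0 := by
      intro t
      have e1 := star z0 t (x + y)
      rw [map_add] at e1
      have e2 := star z0 t x
      have e3 := star z0 t y
      have e4 : (z0 - α z0) * t * d (x + y)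
          = (z0 - α z0) * t * d x + (z0 - α z0) * t * d y := by
        rw [← e1, ← e2, ← e3]; noncomm_ring
      have e5 : (z0 - α z0) * t * (d (x + y) - (d x + d y))
          = (z0 - α z0) * t * d (x + y)
            - ((z0 - α z0) * t * d x + (z0 - α z0) * t * d y) := by noncomm_ring
      rw [e5, e4]
      noncomm_ring
    rcases hprime (z0 - α z0) (d (x + y) - (d x + d y)) key with h | h
    · exact absurd h hz0'
    · have := sub_eq_zero.mp h
      rw [this]
end

section
/- Let R be a prime ring, α an automorphism of R with α ≠ id_R, and F, d maps from R to R such that both F(xy) = F(x)y + α(x)d(y) and F(xy) = F(x)α(y) + xd(y) hold for all x, y ∈ R. Then d is additive and satisfies d(xy) = d(x)y + α(x)d(y) for all x, y ∈ R, i.e., d is a skew derivation with respect to α. -/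
theorem stmt8 {R : Type*} [NonUnitalRing R]
    (hprime : ∀ a b : R, (∀ r : R, a * r * b = 0) → a = 0 ∨ b = 0)
    (α : R ≃+* R) (hα : ∃ z : R, α z ≠ z)
    (F d : R → R)
    (h1 : ∀ x y : R, F (x * y) = F x * y + α x * d y)
    (h2 : ∀ x y : R, F (x * y) = F x * α y + x * d y) :
    (∀ x y : R, d (x + y) = d x + d y) ∧
    (∀ x y : R, d (x * y) = d x * y + α x * d y) := by
  obtain ⟨z, hz⟩ := hα
  -- key cancellation lemma
  have key : ∀ w : R, (∀ x : R, (x - α x) * w = 0) → w = 0 := by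
    intro w hw
    have hsw : ∀ s : R, s * w = α s * w := by
      intro s
      have h := hw s
      rw [sub_mul, sub_eq_zero] at h
      exact h
    have h3 : ∀ t : R, (α z - z) * t * w = 0 := by
      intro t
      have hu : α.symm t * w = t * w := by
        have := hsw (α.symm t)
        rwa [RingEquiv.apply_symm_apply] at this
      have hxu : z * α.symm t * w = α z * t * w := by
        have h := hsw (z * α.symm t)
        rwa [map_mul, RingEquiv.apply_symm_apply] at h
      rw [mul_assoc z, hu, ← mul_assoc] at hxu
      rw [sub_mul, sub_mul, hxu, sub_self]
    rcases hprime (α z - z) w h3 with h | h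
    · exact absurd (sub_eq_zero.mp h) hz
    · exact h
  -- the star identity
  have star : ∀ x y : R, F x * (y - α y) = (x - α x) * d y := by
    intro x y
    have h := (h1 x y).symm.trans (h2 x y)
    rw [mul_sub, sub_mul, sub_eq_sub_iff_add_eq_add]
    exact h.trans (add_comm _ _)
  constructor
  · intro a b
    have hw := key (d (a + b) - d a - d b) ?_
    · have : d (a + b) = d a + d b := by
        rw [sub_sub, sub_eq_zero] at hw
        exact hw
      exact this
    · intro x
      rw [mul_sub, mul_sub, ← star x (a + b), ← star x a, ← star x b, map_add]
      rw [mul_sub, mul_sub, mul_sub, mul_add, mul_add]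
      abel
  · intro y w
    set c := d (y * w) - d y * w - α y * d w with hc
    have hall : ∀ t : R, t * c = 0 := by
      intro t
      have e1 := h1 (α.symm t * y) w
      have e2 := h1 (α.symm t) (y * w)
      have e3 := h1 (α.symm t) y
      rw [mul_assoc] at e1
      have := e1.symm.trans e2
      rw [e3, map_mul, RingEquiv.apply_symm_apply] at this
      simp only [add_mul, mul_assoc] at this
      rw [hc, mul_sub, mul_sub]
      calc t * d (y * w) - t * (d y * w) - t * (α y * d w)
          = (F (α.symm t) * (y * w) + t * d (y * w)) -
            (F (α.symm t) * (y * w) + t * (d y * w) + t * (α y * d w)) := by abel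
        _ = 0 := by rw [← this]; exact sub_self _
    have hcc : ∀ r : R, c * r * c = 0 := by
      intro r
      rw [mul_assoc, hall r, mul_zero]
    rcases hprime c c hcc with h | h <;>
    · rw [hc, sub_sub, sub_eq_zero] at h
      exact h
end

section
/- Let R be a prime ring, α an automorphism of R, and F, d maps from R to R such that F(xy) = F(x)y + α(x)d(y) and F(xy) = F(x)α(y) + xd(y) hold for all x, y ∈ R. If α ≠ id_R, then F(x+y) = F(x) + F(y) and d(x+y) = d(x) + d(y) for all x, y ∈ R. -/
theorem stmt11 {R : Type*} [NonUnitalRing R]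
    (hprime : ∀ a b : R, (∀ r : R, a * r * b = 0) → a = 0 ∨ b = 0)
    (α : R ≃+* R) (hα : ∃ z : R, α z ≠ z)
    (F d : R → R)
    (h1 : ∀ x y : R, F (x * y) = F x * y + α x * d y)
    (h2 : ∀ x y : R, F (x * y) = F x * α y + x * d y) :
    (∀ x y : R, F (x + y) = F x + F y) ∧ (∀ x y : R, d (x + y) = d x + d y) := by
  obtain ⟨z0, hz0⟩ := hα
  have hz0' : α z0 - z0 ≠ 0 := sub_ne_zero.mpr hz0
  -- key identity
  have key : ∀ x y : R, F x * (α y - y) = (α x - x) * d y := by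
    intro x y
    have h := (h1 x y).symm.trans (h2 x y)
    have e : F x * (α y - y) - (α x - x) * d y
        = (F x * α y + x * d y) - (F x * y + α x * d y) := by noncomm_ring
    rw [← h, sub_self] at e
    exact sub_eq_zero.mp e
  -- lemma A : left annihilation by all α z - z forces zero
  have lemA : ∀ c : R, (∀ z : R, (α z - z) * c = 0) → c = 0 := by
    intro c h
    have hr : ∀ r : R, (α z0 - z0) * r * c = 0 := by
      intro r
      have h1' := h (z0 * r)
      rw [map_mul] at h1'
      have h3 : α z0 * ((α r - r) * c) = 0 := by rw [h r, mul_zero]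
      have e : (α z0 - z0) * r * c
          = (α z0 * α r - z0 * r) * c - α z0 * ((α r - r) * c) := by noncomm_ring
      rw [e, h1', h3, sub_zero]
    rcases hprime (α z0 - z0) c hr with h' | h'
    · exact absurd h' hz0'
    · exact h'
  -- lemma B : right annihilation by all α y - y forces zero
  have lemB : ∀ c : R, (∀ y : R, c * (α y - y) = 0) → c = 0 := by
    intro c h
    have hr : ∀ r : R, c * r * (α z0 - z0) = 0 := by
      intro r
      have h1' := h (α.symm r * z0)
      rw [map_mul, α.apply_symm_apply] at h1'
      have h3 : c * (α (α.symm r) - α.symm r) * z0 = 0 := by rw [h (α.symm r), zero_mul]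
      have e : c * r * (α z0 - z0)
          = c * (r * α z0 - α.symm r * z0) - c * (α (α.symm r) - α.symm r) * z0 := by
        rw [α.apply_symm_apply]; noncomm_ring
      rw [e, h1', h3, sub_zero]
    rcases hprime c (α z0 - z0) hr with h' | h'
    · exact h'
    · exact absurd h' hz0'
  constructor
  · intro x y
    have hall : ∀ w : R, (F (x + y) - F x - F y) * (α w - w) = 0 := by
      intro w
      have e0 := key (x + y) w
      have e1 := key x w
      have e2 := key y w
      rw [map_add] at e0
      have e : (F (x + y) - F x - F y) * (α w - w)
          = F (x + y) * (α w - w) - F x * (α w - w) - F y * (α w - w) := by noncomm_ring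
      rw [e, e0, e1, e2]
      noncomm_ring
    have h0 := lemB _ hall
    rw [sub_sub, sub_eq_zero] at h0
    exact h0
  · intro x y
    have hall : ∀ w : R, (α w - w) * (d (x + y) - d x - d y) = 0 := by
      intro w
      have e0 := key w (x + y)
      have e1 := key w x
      have e2 := key w y
      rw [map_add] at e0
      have e : (α w - w) * (d (x + y) - d x - d y)
          = (α w - w) * d (x + y) - (α w - w) * d x - (α w - w) * d y := by noncomm_ring
      rw [e, ← e0, ← e1, ← e2]
      noncomm_ring
    have h0 := lemA _ hall
    rw [sub_sub, sub_eq_zero] at h0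
    exact h0
end
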